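/- Let G be a flower group with pistil C₀. Then C₀ is contained in the center Z(G) of G. -/

import Mathlib

/-- A cyclic subgroup `C` of `G` is a μ-subgroup if it is not contained in any cyclic
subgroup of `G` other than `C` itself. -/
def IsMuSubgroup {G : Type*} [Group G] (C : Subgroup G) : Prop :=
  IsCyclic ↥C ∧ ∀ K : Subgroup G, IsCyclic ↥K → C ≤ K → C = K

/-- A noncyclic group `G` is a flower group with pistil `C0` if any two distinct
μ-subgroups of `G` intersect exactly in `C0`. -/
def IsFlowerGroup {G : Type*} [Group G] (C0 : Subgroup G) : Prop :=
  ¬ IsCyclic G ∧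
    ∀ C C' : Subgroup G, IsMuSubgroup C → IsMuSubgroup C' → C ≠ C' → C ⊓ C' = C0

/-! Every element lies in a μ-subgroup, since a finite group has maximal cyclic subgroups.
As `G` is not cyclic, every μ-subgroup `C` has a distinct partner `C'`, so `C0 = C ⊓ C' ≤ C`.
Hence an element of `C0` shares a cyclic subgroup with every `x : G`, and so commutes with it. -/

section

variable {G : Type*} [Group G]

theorem Subgroup.commute_of_isCyclic {C : Subgroup G} [IsCyclic C] {x y : G}
    (hx : x ∈ C) (hy : y ∈ C) : Commute x y := by
  let _ := IsCyclic.commGroup (α := C)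
  exact congrArg Subtype.val (mul_comm (⟨x, hx⟩ : C) ⟨y, hy⟩)

variable [Finite G]

theorem exists_isMuSubgroup_mem (x : G) : ∃ C : Subgroup G, IsMuSubgroup C ∧ x ∈ C := by
  obtain ⟨C, hxC, hC⟩ :=
    Finite.exists_le_maximal (p := fun K : Subgroup G ↦ IsCyclic K)
      (Subgroup.isCyclic_zpowers x)
  exact ⟨C, ⟨hC.1, fun K hK hCK ↦ le_antisymm hCK (hC.2 hK hCK)⟩,
    hxC (Subgroup.mem_zpowers x)⟩

theorem exists_isMuSubgroup_ne (hG : ¬ IsCyclic G) {C : Subgroup G} (hC : IsMuSubgroup C) :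
    ∃ C' : Subgroup G, IsMuSubgroup C' ∧ C' ≠ C := by
  by_contra! hunique
  have htop : C = ⊤ := by
    refine eq_top_iff.mpr fun x _ ↦ ?_
    obtain ⟨C', hC', hxC'⟩ := exists_isMuSubgroup_mem x
    exact hunique C' hC' ▸ hxC'
  have : IsCyclic (⊤ : Subgroup G) := htop ▸ hC.1
  exact hG (isCyclic_of_surjective Subgroup.topEquiv.toMonoidHom Subgroup.topEquiv.surjective)

theorem IsFlowerGroup.le_of_isMuSubgroup {C0 : Subgroup G} (hG : IsFlowerGroup C0)
    {C : Subgroup G} (hC : IsMuSubgroup C) : C0 ≤ C := by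
  obtain ⟨C', hC', hne⟩ := exists_isMuSubgroup_ne hG.1 hC
  rw [← hG.2 C C' hC hC' hne.symm]
  exact inf_le_left

end

/-- If G is a flower group with pistil C₀, then C₀ ⊆ Z(G). -/
theorem stmt8 {G : Type*} [Group G] [Finite G] (C0 : Subgroup G)
    (hG : IsFlowerGroup C0) :
    C0 ≤ Subgroup.center G := by
  intro g hg
  refine Subgroup.mem_center_iff.mpr fun x ↦ ?_
  obtain ⟨C, hC, hxC⟩ := exists_isMuSubgroup_mem x
  have := hC.1
  exact Subgroup.commute_of_isCyclic hxC (hG.le_of_isMuSubgroup hC hg)
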